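/- arXiv:2502.15744 — 6 statements merged into one kernel-verified Lean document; each statement's English description precedes it below -/
import Mathlib

section
/- Let a < 1, b > -1, c ∈ ℝ with 2a + b - c > 0. Then ∫_{-1}^{1} |x|^b (∫_1^{1/|x|} u^c (u² - 1)^{-a} du) dx = Γ(1-a) Γ((2a+b-c)/2) / ((b+1) Γ((2+b-c)/2)). -/
/-!
Substituting `y = |x|` reduces the integral to `x ∈ (0, 1)`. On the region
`0 < x < 1 < u < 1 / x` Fubini lets us integrate in `x` first: `∫₀^{1/u} x ^ b dx` is
`u ^ (-(b + 1)) / (b + 1)`, which leaves `∫₁^∞ u ^ (c - b - 1) (u ^ 2 - 1) ^ (-a) du`.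
The substitution `u = t ^ (-1/2)` turns this into half the Beta integral
`B((2a + b - c) / 2, 1 - a)`.
-/

open Real MeasureTheory Set

lemma ofReal_rpow_mul_one_sub_rpow {p q t : ℝ} (ht : t ∈ Ioo (0 : ℝ) 1) :
    ((t ^ (p - 1) * (1 - t) ^ (q - 1) : ℝ) : ℂ)
      = (t : ℂ) ^ ((p : ℂ) - 1) * (1 - (t : ℂ)) ^ ((q : ℂ) - 1) := by
  push_cast [Complex.ofReal_cpow ht.1.le, Complex.ofReal_cpow (sub_nonneg.2 ht.2.le)]
  rfl

lemma integrableOn_Ioo_rpow_mul_one_sub_rpow {p q : ℝ} (hp : 0 < p) (hq : 0 < q) :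
    IntegrableOn (fun t : ℝ => t ^ (p - 1) * (1 - t) ^ (q - 1)) (Ioo 0 1) := by
  have h := Complex.betaIntegral_convergent (u := p) (v := q) (by simpa) (by simpa)
  rw [intervalIntegrable_iff_integrableOn_Ioo_of_le zero_le_one] at h
  refine IntegrableOn.congr_fun h.re (fun t ht => ?_) measurableSet_Ioo
  rw [← ofReal_rpow_mul_one_sub_rpow ht]
  exact Complex.ofReal_re _

lemma integral_Ioo_rpow_mul_one_sub_rpow {p q : ℝ} (hp : 0 < p) (hq : 0 < q) :
    ∫ t in Ioo (0 : ℝ) 1, t ^ (p - 1) * (1 - t) ^ (q - 1)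
      = Gamma p * Gamma q / Gamma (p + q) := by
  rw [← ProbabilityTheory.beta, ProbabilityTheory.beta_eq_betaIntegralReal p q hp hq,
    Complex.betaIntegral, intervalIntegral.integral_of_le zero_le_one,
    integral_Ioc_eq_integral_Ioo,
    ← setIntegral_congr_fun measurableSet_Ioo fun t ht => ofReal_rpow_mul_one_sub_rpow ht,
    integral_complex_ofReal, Complex.ofReal_re]

lemma integral_Ioo_neg_comp_abs (f : ℝ → ℝ) (d : ℝ) :
    ∫ x in Ioo (-d) d, f |x| = 2 * ∫ x in Ioo 0 d, f x := calc
  ∫ x in Ioo (-d) d, f |x| = ∫ x, (Iio d).indicator f |x| := by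
    rw [← integral_indicator measurableSet_Ioo]
    congr 1 with x
    simp only [indicator_apply, mem_Ioo, mem_Iio, abs_lt]
  _ = 2 * ∫ x in Ioi 0, (Iio d).indicator f x := integral_comp_abs
  _ = 2 * ∫ x in Ioo 0 d, f x := by
    rw [setIntegral_indicator measurableSet_Iio, Ioi_inter_Iio]

lemma integral_Ioo_zero_rpow {b d : ℝ} (hb : -1 < b) (hd : 0 ≤ d) :
    ∫ x in Ioo 0 d, x ^ b = d ^ (b + 1) / (b + 1) := by
  rw [← integral_Ioc_eq_integral_Ioo, ← intervalIntegral.integral_of_le hd,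
    integral_rpow (Or.inl hb), zero_rpow (by linarith), sub_zero]

lemma image_rpow_neg_half_Ioo : (fun t : ℝ => t ^ (-2⁻¹ : ℝ)) '' Ioo 0 1 = Ioi 1 := by
  ext u
  refine ⟨?_, fun hu => ?_⟩
  · rintro ⟨t, ⟨ht0, ht1⟩, rfl⟩
    exact one_lt_rpow_of_pos_of_lt_one_of_neg ht0 ht1 (by norm_num)
  · have hu0 : 0 < u := zero_lt_one.trans hu
    refine ⟨u ^ (-2 : ℝ), ⟨by positivity, rpow_lt_one_of_one_lt_of_neg hu (by norm_num)⟩, ?_⟩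
    simp only [← rpow_mul hu0.le]
    norm_num

lemma hasDerivWithinAt_rpow_neg_half {t : ℝ} (ht : t ∈ Ioo (0 : ℝ) 1) :
    HasDerivWithinAt (fun t : ℝ => t ^ (-2⁻¹ : ℝ)) (-2⁻¹ * t ^ (-2⁻¹ - 1 : ℝ)) (Ioo 0 1) t :=
  (hasDerivAt_rpow_const (Or.inl ht.1.ne')).hasDerivWithinAt

lemma injOn_rpow_neg_half : InjOn (fun t : ℝ => t ^ (-2⁻¹ : ℝ)) (Ioo 0 1) :=
  (rpow_left_injOn (by norm_num)).mono fun _ ht => ht.1.le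

-- For `u = t ^ (-1/2)` we have `u ^ 2 - 1 = (1 - t) / t`, so the integrand becomes a Beta one.
lemma abs_deriv_smul_rpow_neg_half {a r t : ℝ} (ht : t ∈ Ioo (0 : ℝ) 1) :
    |-2⁻¹ * t ^ (-2⁻¹ - 1 : ℝ)| • ((t ^ (-2⁻¹ : ℝ)) ^ r * ((t ^ (-2⁻¹ : ℝ)) ^ 2 - 1) ^ (-a))
      = 2⁻¹ * (t ^ ((2 * a - r - 1) / 2 - 1) * (1 - t) ^ ((1 - a) - 1)) := by
  obtain ⟨ht0, ht1⟩ := ht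
  have hsq : (t ^ (-2⁻¹ : ℝ)) ^ 2 - 1 = (1 - t) / t := by
    rw [← rpow_natCast, ← rpow_mul ht0.le]
    norm_num [rpow_neg_one]
    field_simp
  have hexp : t ^ ((2 * a - r - 1) / 2 - 1) = t ^ (-2⁻¹ - 1 : ℝ) * t ^ (-2⁻¹ * r) * t ^ a := by
    rw [← rpow_add ht0, ← rpow_add ht0]
    ring_nf
  rw [smul_eq_mul, abs_mul, abs_of_pos (rpow_pos_of_pos ht0 _), hsq,
    div_rpow (by linarith) ht0.le, ← rpow_mul ht0.le, sub_sub_cancel_left, rpow_neg ht0.le a,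
    div_inv_eq_mul, hexp]
  norm_num
  ring

lemma integrableOn_Ioi_one_rpow_mul_sq_sub_one_rpow {a r : ℝ} (ha : a < 1)
    (hr : r + 1 < 2 * a) :
    IntegrableOn (fun u : ℝ => u ^ r * (u ^ 2 - 1) ^ (-a)) (Ioi 1) := by
  rw [← image_rpow_neg_half_Ioo, integrableOn_image_iff_integrableOn_abs_deriv_smul
    measurableSet_Ioo (fun _ => hasDerivWithinAt_rpow_neg_half) injOn_rpow_neg_half]
  exact IntegrableOn.congr_fun
    ((integrableOn_Ioo_rpow_mul_one_sub_rpow (by linarith) (by linarith)).const_mul 2⁻¹)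
    (fun t ht => (abs_deriv_smul_rpow_neg_half ht).symm) measurableSet_Ioo

lemma integral_Ioi_one_rpow_mul_sq_sub_one_rpow {a r : ℝ} (ha : a < 1) (hr : r + 1 < 2 * a) :
    ∫ u in Ioi 1, u ^ r * (u ^ 2 - 1) ^ (-a)
      = Gamma ((2 * a - r - 1) / 2) * Gamma (1 - a) / (2 * Gamma ((1 - r) / 2)) := by
  rw [← image_rpow_neg_half_Ioo, integral_image_eq_integral_abs_deriv_smul measurableSet_Ioo
      (fun _ => hasDerivWithinAt_rpow_neg_half) injOn_rpow_neg_half,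
    setIntegral_congr_fun measurableSet_Ioo fun t ht => abs_deriv_smul_rpow_neg_half ht,
    integral_const_mul, integral_Ioo_rpow_mul_one_sub_rpow (by linarith) (by linarith)]
  ring_nf

lemma Ioo_zero_one_inter_Iio_one_div {u : ℝ} (hu : 1 < u) :
    Ioo 0 1 ∩ Iio (1 / u) = Ioo 0 (1 / u) := by
  rw [Ioo_inter_Iio, min_eq_right ((div_le_one (by linarith)).2 hu.le)]

noncomputable def hyperbolaKernel (b : ℝ) (g : ℝ → ℝ) : ℝ × ℝ → ℝ :=
  {p : ℝ × ℝ | p.1 * p.2 < 1}.indicator fun p => p.1 ^ b * g p.2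

namespace hyperbolaKernel

variable {b : ℝ} {g : ℝ → ℝ}

lemma measurable (hg : Measurable g) : Measurable (hyperbolaKernel b g) :=
  (by fun_prop : Measurable fun p : ℝ × ℝ => p.1 ^ b * g p.2).indicator
    (measurableSet_lt (by fun_prop) measurable_const)

lemma norm_apply {x : ℝ} (hx : 0 ≤ x) (u : ℝ) :
    ‖hyperbolaKernel b g (x, u)‖ = hyperbolaKernel b (fun u => ‖g u‖) (x, u) := by
  rw [hyperbolaKernel, hyperbolaKernel, norm_indicator_eq_indicator_norm]
  simp only [indicator_apply, norm_mul, norm_of_nonneg (rpow_nonneg hx b)]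

lemma fiber_fst {x : ℝ} (hx : 0 < x) :
    (fun u => hyperbolaKernel b g (x, u)) = (Iio (1 / x)).indicator fun u => x ^ b * g u := by
  ext u
  simp only [hyperbolaKernel, indicator_apply, mem_ofPred_eq, mem_Iio, lt_div_iff₀ hx,
    mul_comm u]

lemma fiber_snd {u : ℝ} (hu : 0 < u) :
    (fun x => hyperbolaKernel b g (x, u)) = (Iio (1 / u)).indicator fun x => x ^ b * g u := by
  ext x
  simp only [hyperbolaKernel, indicator_apply, mem_ofPred_eq, mem_Iio, lt_div_iff₀ hu]

lemma integral_fst {x : ℝ} (hx : 0 < x) :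
    ∫ u in Ioi 1, hyperbolaKernel b g (x, u) = x ^ b * ∫ u in Ioo 1 (1 / x), g u := by
  rw [fiber_fst hx, setIntegral_indicator measurableSet_Iio, Ioi_inter_Iio, integral_const_mul]

lemma integrableOn_snd (hb : -1 < b) {u : ℝ} (hu : 1 < u) :
    IntegrableOn (fun x => hyperbolaKernel b g (x, u)) (Ioo 0 1) := by
  rw [fiber_snd (by linarith), IntegrableOn, integrable_indicator_iff measurableSet_Iio,
    IntegrableOn, Measure.restrict_restrict measurableSet_Iio, inter_comm,
    Ioo_zero_one_inter_Iio_one_div hu]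
  exact ((intervalIntegral.integrableOn_Ioo_rpow_iff (by positivity)).2 hb).mul_const _

lemma integral_snd (hb : -1 < b) {u : ℝ} (hu : 1 < u) :
    ∫ x in Ioo 0 1, hyperbolaKernel b g (x, u) = g u / u ^ (b + 1) / (b + 1) := by
  rw [fiber_snd (by linarith), setIntegral_indicator measurableSet_Iio,
    Ioo_zero_one_inter_Iio_one_div hu, integral_mul_const,
    integral_Ioo_zero_rpow hb (by positivity), div_rpow zero_le_one (by linarith), one_rpow]
  ring

lemma integrable (hb : -1 < b) (hg : Measurable g)
    (hgi : IntegrableOn (fun u => g u / u ^ (b + 1)) (Ioi 1)) :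
    Integrable (hyperbolaKernel b g)
      ((volume.restrict (Ioo 0 1)).prod (volume.restrict (Ioi 1))) := by
  rw [integrable_prod_iff' (measurable hg).aestronglyMeasurable]
  refine ⟨ae_restrict_of_forall_mem measurableSet_Ioi fun u hu => integrableOn_snd hb hu, ?_⟩
  refine IntegrableOn.congr_fun (hgi.norm.div_const (b + 1)) (fun u hu => ?_) measurableSet_Ioi
  rw [setIntegral_congr_fun measurableSet_Ioo fun x hx => norm_apply hx.1.le u,
    integral_snd hb hu, norm_div, norm_of_nonneg (rpow_nonneg (zero_le_one.trans hu.le) _)]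

end hyperbolaKernel

theorem integral_Ioo_rpow_mul_integral_Ioo_one_div {b : ℝ} (hb : -1 < b) {g : ℝ → ℝ}
    (hg : Measurable g) (hgi : IntegrableOn (fun u => g u / u ^ (b + 1)) (Ioi 1)) :
    ∫ x in Ioo 0 1, x ^ b * ∫ u in Ioo 1 (1 / x), g u
      = (∫ u in Ioi 1, g u / u ^ (b + 1)) / (b + 1) := by
  have hK := hyperbolaKernel.integrable hb hg hgi
  calc ∫ x in Ioo 0 1, x ^ b * ∫ u in Ioo 1 (1 / x), g u
      = ∫ x in Ioo 0 1, ∫ u in Ioi 1, hyperbolaKernel b g (x, u) :=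
        setIntegral_congr_fun measurableSet_Ioo fun x hx =>
          (hyperbolaKernel.integral_fst hx.1).symm
    _ = ∫ u in Ioi 1, ∫ x in Ioo 0 1, hyperbolaKernel b g (x, u) :=
        (integral_prod _ hK).symm.trans (integral_prod_symm _ hK)
    _ = ∫ u in Ioi 1, g u / u ^ (b + 1) / (b + 1) :=
        setIntegral_congr_fun measurableSet_Ioi fun u hu => hyperbolaKernel.integral_snd hb hu
    _ = (∫ u in Ioi 1, g u / u ^ (b + 1)) / (b + 1) := integral_div _ _

theorem double_integral_gamma (a b c : ℝ) (ha : a < 1) (hb : -1 < b) (habc : 0 < 2 * a + b - c) :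
    (∫ x in Set.Ioo (-1:ℝ) 1, |x| ^ b * ∫ u in Set.Ioo 1 (1 / |x|), u ^ c * (u ^ 2 - 1) ^ (-a))
      = Real.Gamma (1 - a) * Real.Gamma ((2 * a + b - c) / 2)
        / ((b + 1) * Real.Gamma ((2 + b - c) / 2)) := by
  have hr : c - b - 1 + 1 < 2 * a := by linarith
  have hweight : EqOn (fun u : ℝ => u ^ c * (u ^ 2 - 1) ^ (-a) / u ^ (b + 1))
      (fun u => u ^ (c - b - 1) * (u ^ 2 - 1) ^ (-a)) (Ioi 1) := fun u hu => by
    simp only [mul_div_right_comm, ← rpow_sub (zero_lt_one.trans hu), sub_add_eq_sub_sub]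
  rw [integral_Ioo_neg_comp_abs
      (fun y => y ^ b * ∫ u in Ioo 1 (1 / y), u ^ c * (u ^ 2 - 1) ^ (-a)),
    integral_Ioo_rpow_mul_integral_Ioo_one_div hb (by fun_prop)
      ((integrableOn_Ioi_one_rpow_mul_sq_sub_one_rpow ha hr).congr_fun hweight.symm
        measurableSet_Ioi),
    setIntegral_congr_fun measurableSet_Ioi hweight,
    integral_Ioi_one_rpow_mul_sq_sub_one_rpow ha hr,
    show (2 * a - (c - b - 1) - 1) / 2 = (2 * a + b - c) / 2 by ring,
    show (1 - (c - b - 1)) / 2 = (2 + b - c) / 2 by ring]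
  have hG : Gamma ((2 + b - c) / 2) ≠ 0 := (Gamma_pos_of_pos (by linarith)).ne'
  field_simp
end

section
/- For β > 1 the energy E*_β = ∫ (1/2)|x|^β μ_β(dx) + (1-β)/2 equals ((β-1)/2)(β(2/β)^{(2β-1)/(β-1)}/(4β-2) - 1), where μ_β is the probability measure with density (β(β-1)/4)|x|^{β-2} on [-(2/β)^{1/(β-1)}, (2/β)^{1/(β-1)}]. -/
/-!
The potential `(1/2)|x|^β` integrated against the density `(β(β-1)/4)|x|^{β-2}` on `[-R, R]`
is `(β(β-1)/8) ∫_{-R}^{R} |x|^{2β-2} dx`, and by symmetry this is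
`(β(β-1)/4) R^{2β-1}/(2β-1)`; with `R^{2β-1} = (2/β)^{(2β-1)/(β-1)}` the formula is algebra.
-/

open Real MeasureTheory Set

theorem integral_withDensity_ofReal {X : Type*} [MeasurableSpace X] {μ : Measure X} {d : X → ℝ}
    (hd : Measurable d) (hd0 : ∀ x, 0 ≤ d x) (g : X → ℝ) :
    ∫ x, g x ∂μ.withDensity (fun x => ENNReal.ofReal (d x)) = ∫ x, d x * g x ∂μ := by
  rw [integral_withDensity_eq_integral_toReal_smul hd.ennreal_ofReal
    (ae_of_all _ fun _ => ENNReal.ofReal_lt_top)]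
  simp only [ENNReal.toReal_ofReal (hd0 _), smul_eq_mul]

theorem integral_Icc_abs_rpow {p R : ℝ} (hp : -1 < p) (hR : 0 ≤ R) :
    ∫ x in Icc (-R) R, |x| ^ p = 2 * (R ^ (p + 1) / (p + 1)) := by
  let f : ℝ → ℝ := (Iic R).indicator fun x => x ^ p
  calc ∫ x in Icc (-R) R, |x| ^ p
      = ∫ x, f |x| := by
        rw [← integral_indicator measurableSet_Icc]
        congr 1 with x
        simp only [f, indicator_apply, mem_Iic, mem_Icc, abs_le]
    _ = 2 * ∫ x in Ioc 0 R, x ^ p := by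
        rw [integral_comp_abs, setIntegral_indicator measurableSet_Iic, Ioi_inter_Iic]
    _ = 2 * (R ^ (p + 1) / (p + 1)) := by
        rw [← intervalIntegral.integral_of_le hR, integral_rpow (Or.inl hp),
          zero_rpow (by linarith)]
        ring

/-- For `β > 1`, the energy `E*_β = ∫ (1/2)|x|^β dμ_β + (1-β)/2` of the equilibrium measure
`μ_β` with density `(β(β-1)/4)|x|^{β-2}` on `[-(2/β)^{1/(β-1)}, (2/β)^{1/(β-1)}]` equals
`((β-1)/2)(β(2/β)^{(2β-1)/(β-1)}/(4β-2) - 1)`. -/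
theorem energy_power_potential_linear_kernel (β : ℝ) (hβ : 1 < β) :
    let R : ℝ := (2 / β) ^ ((1:ℝ) / (β - 1))
    let μ : Measure ℝ := volume.withDensity fun x =>
      ENNReal.ofReal (if x ∈ Set.Icc (-R) R then β * (β - 1) / 4 * |x| ^ (β - 2) else 0)
    (∫ x, (1 / 2) * |x| ^ β ∂μ) + (1 - β) / 2
      = ((β - 1) / 2) * (β * (2 / β) ^ ((2 * β - 1) / (β - 1)) / (4 * β - 2) - 1) := by
  intro R μ
  have hR : 0 ≤ R := by positivity
  have h_density_nonneg :
      ∀ x, 0 ≤ (if x ∈ Icc (-R) R then β * (β - 1) / 4 * |x| ^ (β - 2) else 0) := fun x => by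
    split_ifs
    exacts [mul_nonneg (by nlinarith) (by positivity), le_rfl]
  have h_moment : ∫ x, (1 / 2) * |x| ^ β ∂μ
      = β * (β - 1) / 8 * ∫ x in Icc (-R) R, |x| ^ (2 * β - 2) := by
    have h_density_meas : Measurable fun x : ℝ =>
        if x ∈ Icc (-R) R then β * (β - 1) / 4 * |x| ^ (β - 2) else 0 :=
      Measurable.ite measurableSet_Icc (by fun_prop) measurable_const
    rw [integral_withDensity_ofReal h_density_meas h_density_nonneg, ← integral_const_mul,
      ← integral_indicator measurableSet_Icc]
    congr 1 with x
    -- `rpow_add'` also covers `x = 0`, since `2β - 2 ≠ 0`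
    rw [indicator_apply, show 2 * β - 2 = (β - 2) + β by ring,
      rpow_add' (abs_nonneg x) (by linarith)]
    split_ifs <;> ring
  have h_R_pow : R ^ (2 * β - 1) = (2 / β) ^ ((2 * β - 1) / (β - 1)) := by
    rw [← rpow_mul (by positivity)]
    ring_nf
  rw [h_moment, integral_Icc_abs_rpow (by linarith) hR, show 2 * β - 2 + 1 = 2 * β - 1 by ring,
    h_R_pow, show 4 * β - 2 = 2 * (2 * β - 1) by ring]
  have : 2 * β - 1 ≠ 0 := by linarith
  field_simp
  ring
end

section
/- Let k ∈ (-1,1), k ≠ 0, α_k > 0, and define f(x,ω) = (3-k)x^{2-k} + 2(2-k)ω x^{1-k} - α_k on (0,∞) × ℝ. Then for every ω ∈ ℝ there exists a unique L_k(ω) > 0 with f(L_k(ω), ω) = 0. -/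
open Real Filter Set Topology

/-- For `k ∈ (-1,1)`, `k ≠ 0`, `α > 0`, and every `ω ∈ ℝ`, the function
`f(x,ω) = (3-k)x^{2-k} + 2(2-k)ω x^{1-k} - α` has a unique positive root in `x`. -/
theorem unique_positive_root (k α : ℝ) (hk : k ∈ Set.Ioo (-1:ℝ) 1) (hk0 : k ≠ 0)
    (hα : 0 < α) (ω : ℝ) :
    ∃! L : ℝ, 0 < L ∧
      (3 - k) * L ^ (2 - k) + 2 * (2 - k) * ω * L ^ (1 - k) - α = 0 := by
  obtain ⟨hk1, hk2⟩ := hk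
  set c := 2 * (2 - k) * ω with hc
  set g : ℝ → ℝ := fun x => (3 - k) * x + c - α * x ^ (k - 1) with hg
  have hm : (0:ℝ) < 3 - k := by linarith
  have he : k - 1 < 0 := by linarith
  -- key equivalence
  have key : ∀ L : ℝ, 0 < L →
      ((3 - k) * L ^ (2 - k) + 2 * (2 - k) * ω * L ^ (1 - k) - α = 0 ↔ g L = 0) := by
    intro L hL
    have e1 : L ^ (2 - k) = L ^ (1 - k) * L := by
      rw [show (2 - k : ℝ) = (1 - k) + 1 by ring, Real.rpow_add_one hL.ne']
    have e2 : L ^ (1 - k) * L ^ (k - 1) = 1 := by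
      rw [← Real.rpow_add hL]; norm_num
    have factored : (3 - k) * L ^ (2 - k) + 2 * (2 - k) * ω * L ^ (1 - k) - α
        = L ^ (1 - k) * g L := by
      rw [e1, hg, ← hc]
      simp only
      linear_combination α * e2
    rw [factored]
    constructor
    · intro h
      rcases mul_eq_zero.mp h with h | h
      · exact absurd h (Real.rpow_pos_of_pos hL _).ne'
      · exact h
    · intro h; rw [h, mul_zero]
  -- strict monotonicity of g on Ioi 0
  have hmono : StrictMonoOn g (Ioi 0) := by
    intro x hx y hy hxy
    have h1 : (3 - k) * x < (3 - k) * y := (mul_lt_mul_iff_right₀ hm).mpr hxy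
    have h2 : y ^ (k - 1) < x ^ (k - 1) := Real.rpow_lt_rpow_of_neg hx hxy he
    have h3 : α * y ^ (k - 1) < α * x ^ (k - 1) := (mul_lt_mul_iff_right₀ hα).mpr h2
    simp only [hg]
    linarith
  -- behavior near zero
  have t0 : Tendsto (fun x : ℝ => x ^ (k - 1)) (𝓝[>] 0) atTop := by
    have h1 : Tendsto (fun x : ℝ => (x⁻¹) ^ (1 - k)) (𝓝[>] 0) atTop :=
      (tendsto_rpow_atTop (by linarith : (0:ℝ) < 1 - k)).comp tendsto_inv_nhdsGT_zero
    refine h1.congr' ?_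
    filter_upwards [self_mem_nhdsWithin] with x (hx : 0 < x)
    rw [Real.inv_rpow hx.le, ← Real.rpow_neg hx.le]
    ring_nf
  have tneg : Tendsto g (𝓝[>] 0) atBot := by
    have h1 : Tendsto (fun x : ℝ => (3 - k) * x + c) (𝓝[>] 0) (𝓝 ((3 - k) * 0 + c)) :=
      (((continuous_const.mul continuous_id).add continuous_const).tendsto 0).mono_left
        nhdsWithin_le_nhds
    have h3 : Tendsto (fun x : ℝ => -(α * x ^ (k - 1))) (𝓝[>] 0) atBot :=
      tendsto_neg_atTop_atBot.comp (t0.const_mul_atTop hα)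
    exact (h1.add_atBot h3).congr (fun x => by simp [hg]; ring)
  -- behavior at infinity
  have tpos : Tendsto g atTop atTop := by
    have h1 : Tendsto (fun x : ℝ => (3 - k) * x + c) atTop atTop :=
      tendsto_atTop_add_const_right _ c (tendsto_id.const_mul_atTop hm)
    have h2 : Tendsto (fun x : ℝ => -(α * x ^ (k - 1))) atTop (𝓝 (-(α * 0))) := by
      refine (((tendsto_rpow_neg_atTop (by linarith : (0:ℝ) < 1 - k)).congr
        (fun x => by norm_num)).const_mul α).neg
    exact (h1.atTop_add h2).congr (fun x => by simp [hg]; ring)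
  -- existence of a point where g < 0, with a > 0
  obtain ⟨a, ha0, hga⟩ : ∃ a : ℝ, 0 < a ∧ g a < 0 := by
    have := (tneg.eventually (eventually_lt_atBot 0)).and self_mem_nhdsWithin
    obtain ⟨a, h1, h2⟩ := this.exists
    exact ⟨a, h2, h1⟩
  -- existence of a point where g > 0, with b > a
  obtain ⟨b, hab, hgb⟩ : ∃ b : ℝ, a < b ∧ 0 < g b := by
    have := (tpos.eventually (eventually_gt_atTop 0)).and (eventually_gt_atTop a)
    obtain ⟨b, h1, h2⟩ := this.exists
    exact ⟨b, h2, h1⟩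
  -- continuity on [a,b]
  have hcont : ContinuousOn g (Icc a b) := by
    apply ContinuousOn.sub
    · exact ((continuous_const.mul continuous_id).add continuous_const).continuousOn
    · apply ContinuousOn.mul continuousOn_const
      apply ContinuousOn.rpow_const continuousOn_id
      intro x hx
      exact Or.inl (ne_of_gt (lt_of_lt_of_le ha0 hx.1))
  -- IVT
  obtain ⟨L, hLmem, hgL⟩ := intermediate_value_Icc hab.le hcont ⟨hga.le, hgb.le⟩
  have hL0 : 0 < L := lt_of_lt_of_le ha0 hLmem.1
  refine ⟨L, ⟨hL0, (key L hL0).mpr hgL⟩, ?_⟩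
  rintro M ⟨hM0, hMeq⟩
  have hgM : g M = 0 := (key M hM0).mp hMeq
  exact hmono.injOn hM0 hL0 (by rw [hgM, hgL])
end

section
/- With f(x,ω) = (3-k)x^{2-k} + 2(2-k)ω x^{1-k} - α_k for k ∈ (-1,1), k ≠ 0, α_k > 0, and L_k(ω) the unique positive root, the function ω ↦ L_k(ω) is continuously differentiable with L_k'(ω) < 0 (strictly decreasing), and ω ↦ L_k(ω) + 2ω is strictly increasing. -/
/-!
Solving `f(x, ω) = 0` for `ω` gives the explicit inverse
`ω = g(x) = (α x^{k-1} - (3-k) x) / (2(2-k))` of `L` on `(0, ∞)`. Since `k < 1` and `α > 0`,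
`g' < -1/2` there, so `L` is antitone with range `(0, ∞)`, hence continuous, and the inverse
function theorem gives `L' = 1 / g'(L) ∈ (-2, 0)`.
-/

open Real Set Filter Topology Function

section LeftInverse

variable {s : Set ℝ} {g g' L : ℝ → ℝ}

theorem StrictAntiOn.strictAnti_of_leftInverse (hg : StrictAntiOn g s) (hLs : ∀ ω, L ω ∈ s)
    (hgL : LeftInverse g L) : StrictAnti L := fun a b hab =>
  (hg.lt_iff_gt (hLs a) (hLs b)).1 (by rwa [hgL, hgL])

theorem Function.LeftInverse.leftInvOn_of_injOn (hgL : LeftInverse g L) (hg : InjOn g s)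
    (hLs : ∀ ω, L ω ∈ s) : LeftInvOn L g s := fun x hx =>
  hg (hLs (g x)) hx (hgL (g x))

theorem Antitone.continuous_of_range_mem_nhds (hL : Antitone L)
    (h : ∀ ω, range L ∈ 𝓝 (L ω)) : Continuous L :=
  continuous_iff_continuousAt.2 fun ω =>
    continuousAt_of_monotoneOn_of_image_mem_nhds (f := fun x => OrderDual.toDual (L x))
      (fun _ _ _ _ hab => hL hab) univ_mem (by rw [image_univ]; exact h ω)

theorem strictAntiOn_of_hasDerivAt_neg (hsc : Convex ℝ s)
    (hg : ∀ x ∈ s, HasDerivAt g (g' x) x) (hg' : ∀ x ∈ s, g' x < 0) : StrictAntiOn g s :=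
  strictAntiOn_of_hasDerivWithinAt_neg hsc
    (fun x hx => (hg x hx).continuousAt.continuousWithinAt)
    (fun x hx => (hg x (interior_subset hx)).hasDerivWithinAt)
    (fun x hx => hg' x (interior_subset hx))

theorem continuous_of_leftInverse_of_hasDerivAt_neg (hs : IsOpen s) (hsc : Convex ℝ s)
    (hg : ∀ x ∈ s, HasDerivAt g (g' x) x) (hg' : ∀ x ∈ s, g' x < 0) (hLs : ∀ ω, L ω ∈ s)
    (hgL : LeftInverse g L) : Continuous L := by
  have hanti := strictAntiOn_of_hasDerivAt_neg hsc hg hg'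
  have hrange : s ⊆ range L := fun x hx =>
    ⟨g x, hgL.leftInvOn_of_injOn hanti.injOn hLs hx⟩
  exact (hanti.strictAnti_of_leftInverse hLs hgL).antitone.continuous_of_range_mem_nhds
    fun ω => mem_of_superset (hs.mem_nhds (hLs ω)) hrange

theorem hasDerivAt_of_leftInverse_of_hasDerivAt_neg (hs : IsOpen s) (hsc : Convex ℝ s)
    (hg : ∀ x ∈ s, HasDerivAt g (g' x) x) (hg' : ∀ x ∈ s, g' x < 0) (hLs : ∀ ω, L ω ∈ s)
    (hgL : LeftInverse g L) (ω : ℝ) : HasDerivAt L (g' (L ω))⁻¹ ω :=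
  (hg (L ω) (hLs ω)).of_local_left_inverse
    (continuous_of_leftInverse_of_hasDerivAt_neg hs hsc hg hg' hLs hgL).continuousAt
    (hg' _ (hLs ω)).ne (Eventually.of_forall hgL)

theorem contDiff_one_of_leftInverse_of_hasDerivAt_neg (hs : IsOpen s) (hsc : Convex ℝ s)
    (hg : ∀ x ∈ s, HasDerivAt g (g' x) x) (hg' : ∀ x ∈ s, g' x < 0)
    (hg'c : ContinuousOn g' s) (hLs : ∀ ω, L ω ∈ s) (hgL : LeftInverse g L) :
    ContDiff ℝ 1 L := by
  have hL := hasDerivAt_of_leftInverse_of_hasDerivAt_neg hs hsc hg hg' hLs hgL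
  have hLc := continuous_of_leftInverse_of_hasDerivAt_neg hs hsc hg hg' hLs hgL
  refine contDiff_one_iff_deriv.2 ⟨fun ω => (hL ω).differentiableAt, ?_⟩
  rw [funext fun ω => (hL ω).deriv]
  exact (hg'c.comp_continuous hLc hLs).inv₀ fun ω => (hg' _ (hLs ω)).ne

end LeftInverse

section RootEquation

variable {k α : ℝ}

noncomputable def omegaOfRoot (k α x : ℝ) : ℝ := (α * x ^ (k - 1) - (3 - k) * x) / (2 * (2 - k))

noncomputable def derivOmegaOfRoot (k α x : ℝ) : ℝ :=
  (α * (k - 1) * x ^ (k - 2) - (3 - k)) / (2 * (2 - k))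

theorem omegaOfRoot_eq {x ω : ℝ} (hk : k ≠ 2) (hx : 0 < x)
    (h : (3 - k) * x ^ (2 - k) + 2 * (2 - k) * ω * x ^ (1 - k) - α = 0) :
    omegaOfRoot k α x = ω := by
  have h2k : 2 * (2 - k) ≠ 0 := mul_ne_zero two_ne_zero (sub_ne_zero.2 hk.symm)
  have e1 : x ^ (2 - k) * x ^ (k - 1) = x := by rw [← rpow_add hx]; norm_num
  have e2 : x ^ (1 - k) * x ^ (k - 1) = 1 := by rw [← rpow_add hx]; norm_num
  rw [omegaOfRoot, div_eq_iff h2k]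
  linear_combination (-x ^ (k - 1)) * h + (3 - k) * e1 + 2 * (2 - k) * ω * e2

theorem hasDerivAt_omegaOfRoot {x : ℝ} (hx : 0 < x) :
    HasDerivAt (omegaOfRoot k α) (derivOmegaOfRoot k α x) x := by
  have h : HasDerivAt (fun y => (α * y ^ (k - 1) - (3 - k) * y) / (2 * (2 - k)))
      ((α * ((k - 1) * x ^ (k - 1 - 1)) - (3 - k) * 1) / (2 * (2 - k))) x :=
    (((hasDerivAt_rpow_const (Or.inl hx.ne')).const_mul α).sub
      ((hasDerivAt_id x).const_mul (3 - k))).div_const _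
  exact h.congr_deriv (by rw [derivOmegaOfRoot]; ring_nf)

theorem derivOmegaOfRoot_lt (hk : k < 1) (hα : 0 < α) {x : ℝ} (hx : 0 < x) :
    derivOmegaOfRoot k α x < -(1 / 2) := by
  have hpow : 0 < x ^ (k - 2) := rpow_pos_of_pos hx _
  have hneg : α * (k - 1) * x ^ (k - 2) < 0 :=
    mul_neg_of_neg_of_pos (mul_neg_of_pos_of_neg hα (by linarith)) hpow
  rw [derivOmegaOfRoot, div_lt_iff₀ (by linarith)]
  linarith

theorem continuousOn_derivOmegaOfRoot : ContinuousOn (derivOmegaOfRoot k α) (Ioi 0) :=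
  fun _ hx => ((continuousAt_const.mul (continuousAt_rpow_const _ _ (Or.inl (ne_of_gt hx)))).sub
    continuousAt_const).div_const _ |>.continuousWithinAt

end RootEquation

theorem root_function_properties_general (k α : ℝ) (hk : k ∈ Set.Ioo (-1:ℝ) 1)
    (hα : 0 < α) (L : ℝ → ℝ)
    (hL : ∀ ω : ℝ, 0 < L ω ∧
      (3 - k) * (L ω) ^ (2 - k) + 2 * (2 - k) * ω * (L ω) ^ (1 - k) - α = 0) :
    ContDiff ℝ 1 L ∧ (∀ ω : ℝ, deriv L ω < 0) ∧ StrictAnti L ∧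
      StrictMono (fun ω => L ω + 2 * ω) := by
  have hLpos : ∀ ω, L ω ∈ Ioi (0 : ℝ) := fun ω => (hL ω).1
  have hinv : LeftInverse (omegaOfRoot k α) L := fun ω =>
    omegaOfRoot_eq (by linarith [hk.2]) (hL ω).1 (hL ω).2
  have hg : ∀ x ∈ Ioi (0 : ℝ), HasDerivAt (omegaOfRoot k α) (derivOmegaOfRoot k α x) x :=
    fun _ hx => hasDerivAt_omegaOfRoot hx
  have hg'_lt : ∀ x ∈ Ioi (0 : ℝ), derivOmegaOfRoot k α x < -(1 / 2) :=
    fun _ hx => derivOmegaOfRoot_lt hk.2 hα hx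
  have hg'_neg : ∀ x ∈ Ioi (0 : ℝ), derivOmegaOfRoot k α x < 0 :=
    fun x hx => (hg'_lt x hx).trans (by norm_num)
  have hL' := hasDerivAt_of_leftInverse_of_hasDerivAt_neg isOpen_Ioi (convex_Ioi 0) hg hg'_neg
    hLpos hinv
  have hL'_neg : ∀ ω, (derivOmegaOfRoot k α (L ω))⁻¹ < 0 := fun ω =>
    inv_lt_zero.2 (hg'_neg _ (hLpos ω))
  have hL'_gt : ∀ ω, -2 < (derivOmegaOfRoot k α (L ω))⁻¹ := fun ω => by
    simpa using (inv_lt_inv_of_neg (by norm_num) (hg'_neg _ (hLpos ω))).2 (hg'_lt _ (hLpos ω))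
  refine ⟨contDiff_one_of_leftInverse_of_hasDerivAt_neg isOpen_Ioi (convex_Ioi 0) hg hg'_neg
      continuousOn_derivOmegaOfRoot hLpos hinv, fun ω => (hL' ω).deriv ▸ hL'_neg ω,
    strictAnti_of_hasDerivAt_neg hL' hL'_neg,
    strictMono_of_hasDerivAt_pos (fun ω => (hL' ω).add ((hasDerivAt_id ω).const_mul 2))
      fun ω => ?_⟩
  linarith [hL'_gt ω]

/-- If `L : ℝ → ℝ` assigns to each `ω` the unique positive root of
`f(x,ω) = (3-k)x^{2-k} + 2(2-k)ω x^{1-k} - α`, then `L` is continuously differentiable with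
`L' < 0` (so `L` is strictly decreasing), and `ω ↦ L(ω) + 2ω` is strictly increasing. -/
theorem root_function_properties (k α : ℝ) (hk : k ∈ Set.Ioo (-1:ℝ) 1) (hk0 : k ≠ 0)
    (hα : 0 < α) (L : ℝ → ℝ)
    (hL : ∀ ω : ℝ, 0 < L ω ∧
      (3 - k) * (L ω) ^ (2 - k) + 2 * (2 - k) * ω * (L ω) ^ (1 - k) - α = 0) :
    ContDiff ℝ 1 L ∧ (∀ ω : ℝ, deriv L ω < 0) ∧ StrictAnti L ∧
      StrictMono (fun ω => L ω + 2 * ω) :=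
  root_function_properties_general k α hk hα L hL
end

section
/- With f and L_k as above, L_k(ω) + 2ω > 0 if and only if ω > ω_k, where ω_k = -(1/2) α_k^{1/(2-k)}. -/
open Real

/-- If `L : ℝ → ℝ` assigns to each `ω` the unique positive root of
`f(x,ω) = (3-k)x^{2-k} + 2(2-k)ω x^{1-k} - α`, then `L(ω) + 2ω > 0` iff `ω > ω_k`,
where `ω_k = -(1/2) α^{1/(2-k)}`. -/
theorem root_threshold (k α : ℝ) (hk : k ∈ Set.Ioo (-1:ℝ) 1) (hk0 : k ≠ 0)
    (hα : 0 < α) (L : ℝ → ℝ)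
    (hL : ∀ ω : ℝ, 0 < L ω ∧
      (3 - k) * (L ω) ^ (2 - k) + 2 * (2 - k) * ω * (L ω) ^ (1 - k) - α = 0)
    (ω : ℝ) :
    0 < L ω + 2 * ω ↔ -(1 / 2) * α ^ ((1:ℝ) / (2 - k)) < ω := by
  obtain ⟨hk1, hk2⟩ := hk
  have h2k : 0 < 2 - k := by linarith
  obtain ⟨hx, heq⟩ := hL ω
  set x := L ω with hxdef
  set c := α ^ ((1:ℝ) / (2 - k)) with hcdef
  have hc0 : 0 < c := Real.rpow_pos_of_pos hα _
  have hcα : c ^ (2 - k) = α := by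
    rw [hcdef, ← Real.rpow_mul hα.le, one_div_mul_cancel h2k.ne', Real.rpow_one]
  have hx21 : x ^ (2 - k) = x ^ (1 - k) * x := by
    rw [show (2:ℝ) - k = (1 - k) + 1 by ring, Real.rpow_add_one hx.ne']
  have hxk : 0 < x ^ (1 - k) := Real.rpow_pos_of_pos hx _
  have hmain : α - x ^ (2 - k) = (2 - k) * x ^ (1 - k) * (x + 2 * ω) := by
    rw [hx21] at heq ⊢
    linear_combination -heq
  have key : 0 < x + 2 * ω ↔ x < c := by
    constructor
    · intro h
      by_contra hle
      push_neg at hle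
      have : c ^ (2 - k) ≤ x ^ (2 - k) := Real.rpow_le_rpow hc0.le hle h2k.le
      rw [hcα] at this
      nlinarith [mul_pos (mul_pos h2k hxk) h]
    · intro h
      have : x ^ (2 - k) < c ^ (2 - k) := Real.rpow_lt_rpow hx.le h h2k
      rw [hcα] at this
      nlinarith [mul_pos h2k hxk]
  constructor
  · intro h
    have hxc := key.mp h
    linarith
  · intro h
    by_contra hle
    push_neg at hle
    have hcx : c ≤ x := by
      by_contra hlt
      push_neg at hlt
      exact absurd (key.mpr hlt) (not_lt.mpr hle)
    linarith
end

section
/- For k ∈ (0,1) and x ∈ (0,1): ∫₀¹ sign(x-t) |x-t|^{k-1} (1-t)^{(1-k)/2} t^{-(1+k)/2} dt = π / sin((1-k)π/2). -/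
/-!
Split the integral at `x`. The Möbius substitutions `t = x (1 - s) / (1 - x s)` on `(0, x)` and
`t = x / (1 - s (1 - x))` on `(x, 1)` turn both halves into integrals over `(0, 1)` carrying the
common factor `x ^ ((k - 1) / 2) * (1 - x) ^ ((1 + k) / 2)`, and the difference of the two new
integrands is `x * s ^ k (1 - s) ^ (-(1 + k) / 2) (2 - s) / ((1 - x s) (1 - s (1 - x)))`.
With `y = x (1 - x)` the denominator is `1 - s + y s ^ 2`, so `v = (1 - s) / s ^ 2` produces the
Stieltjes integral `∫₀^∞ v ^ (-(1 + k) / 2) / (y + v) dv`, and `v = y t / (1 - t)` reduces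
this to `y ^ (-(1 + k) / 2)` times the Beta integral
`B((1 - k) / 2, (1 + k) / 2) = π / sin ((1 - k) π / 2)`. The powers of `x` and `1 - x` cancel.
-/

open Real MeasureTheory Set

section ChangeOfVariables

variable {s t : Set ℝ} {φ φ' f g : ℝ → ℝ}

theorem setIntegral_eq_of_bijOn (hs : MeasurableSet s) (hφ : BijOn φ s t)
    (hφ' : ∀ u ∈ s, HasDerivAt φ (φ' u) u) (hfg : EqOn (fun u => |φ' u| * f (φ u)) g s) :
    ∫ v in t, f v = ∫ u in s, g u := by
  rw [← hφ.image_eq, integral_image_eq_integral_abs_deriv_smul hs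
    (fun u hu => (hφ' u hu).hasDerivWithinAt) hφ.injOn]
  exact setIntegral_congr_fun hs hfg

theorem integrableOn_of_bijOn (hs : MeasurableSet s) (hφ : BijOn φ s t)
    (hφ' : ∀ u ∈ s, HasDerivAt φ (φ' u) u) (hfg : EqOn (fun u => |φ' u| * f (φ u)) g s)
    (hg : IntegrableOn g s) : IntegrableOn f t := by
  rw [← hφ.image_eq, integrableOn_image_iff_integrableOn_abs_deriv_smul hs
    (fun u hu => (hφ' u hu).hasDerivWithinAt) hφ.injOn]
  exact hg.congr_fun hfg.symm hs

end ChangeOfVariables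

theorem integrableOn_rpow_mul_one_sub_rpow_mul {p q : ℝ} {c : ℝ → ℝ} (hp : -1 < p)
    (hq : -1 < q) (hc : ContinuousOn c (Icc 0 1)) :
    IntegrableOn (fun s => s ^ p * (1 - s) ^ q * c s) (Ioo 0 1) := by
  have hhalf : uIcc (0 : ℝ) (1 / 2) ⊆ Icc 0 1 := by
    rw [uIcc_of_le (by norm_num)]; exact Icc_subset_Icc le_rfl (by norm_num)
  have hbase : ∀ r : ℝ, ContinuousOn (fun s : ℝ => (1 - s) ^ r) (uIcc 0 (1 / 2)) :=
    fun r => ContinuousOn.rpow_const (by fun_prop) fun s hs => Or.inl (by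
      rw [uIcc_of_le (by norm_num)] at hs; linarith [hs.2])
  have hleft : IntervalIntegrable (fun s => s ^ p * (1 - s) ^ q * c s) volume 0 (1 / 2) := by
    simp_rw [mul_assoc]
    exact (intervalIntegral.intervalIntegrable_rpow' hp).mul_continuousOn
      ((hbase q).mul (hc.mono hhalf))
  have hright : IntervalIntegrable (fun s => s ^ p * (1 - s) ^ q * c s) volume (1 / 2) 1 := by
    have hc' : ContinuousOn (fun u => c (1 - u)) (uIcc 0 (1 / 2)) :=
      hc.comp (by fun_prop) fun u hu => by
        have := hhalf hu; constructor <;> linarith [this.1, this.2]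
    have := ((intervalIntegral.intervalIntegrable_rpow' (a := 0) (b := 1 / 2) hq).mul_continuousOn
      ((hbase p).mul hc')).comp_sub_left 1
    norm_num at this
    convert this.symm using 1
    ext s; ring
  exact (intervalIntegrable_iff_integrableOn_Ioo_of_le zero_le_one).1 (hleft.trans hright)

theorem Complex.betaIntegral_ofReal (u v : ℝ) :
    Complex.betaIntegral u v = ↑(∫ t in (0 : ℝ)..1, t ^ (u - 1) * (1 - t) ^ (v - 1)) := by
  rw [← intervalIntegral.integral_ofReal]
  refine intervalIntegral.integral_congr fun t ht => ?_
  rw [uIcc_of_le zero_le_one] at ht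
  push_cast [Complex.ofReal_cpow ht.1, Complex.ofReal_cpow (sub_nonneg.2 ht.2)]
  rfl

theorem Real.Gamma_mul_Gamma_eq_betaIntegral {u v : ℝ} (hu : 0 < u) (hv : 0 < v) :
    Gamma u * Gamma v = Gamma (u + v) * ∫ t in (0 : ℝ)..1, t ^ (u - 1) * (1 - t) ^ (v - 1) := by
  have := Complex.Gamma_mul_Gamma_eq_betaIntegral (s := u) (t := v) (by simpa) (by simpa)
  rw [Complex.betaIntegral_ofReal, ← Complex.ofReal_add, Complex.Gamma_ofReal,
    Complex.Gamma_ofReal, Complex.Gamma_ofReal] at this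
  exact_mod_cast this

theorem integral_rpow_mul_one_sub_rpow_neg {c : ℝ} (h0 : 0 < c) (h1 : c < 1) :
    ∫ t in Ioo (0 : ℝ) 1, t ^ (c - 1) * (1 - t) ^ (-c) = π / sin (π * c) := by
  have := Real.Gamma_mul_Gamma_eq_betaIntegral h0 (sub_pos.2 h1)
  rw [add_sub_cancel, Gamma_one, one_mul, Gamma_mul_Gamma_one_sub, sub_sub_cancel_left] at this
  rw [← integral_Ioc_eq_integral_Ioo, ← intervalIntegral.integral_of_le zero_le_one, this]

theorem bijOn_mul_div_one_sub {y : ℝ} (hy : 0 < y) :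
    BijOn (fun t => y * t / (1 - t)) (Ioo 0 1) (Ioi 0) := by
  refine InvOn.bijOn (f' := fun v => v / (y + v)) ⟨fun t ht => ?_, fun v hv => ?_⟩
    (fun t ht => ?_) (fun v hv => ?_)
  · have : 0 < 1 - t := sub_pos.2 ht.2
    dsimp only
    field_simp
    ring
  · have : 0 < y + v := by linarith [mem_Ioi.1 hv]
    dsimp only
    field_simp
    rw [add_sub_cancel_right]
    field_simp
  · have : 0 < 1 - t := sub_pos.2 ht.2
    have := ht.1
    exact mem_Ioi.2 (by positivity)
  · have := mem_Ioi.1 hv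
    exact ⟨by positivity, (div_lt_one (by positivity)).2 (by linarith)⟩

theorem hasDerivAt_mul_div_one_sub (y : ℝ) {t : ℝ} (ht : 1 - t ≠ 0) :
    HasDerivAt (fun t => y * t / (1 - t)) (y / (1 - t) ^ 2) t := by
  refine (((hasDerivAt_id' t).const_mul y).div
    ((hasDerivAt_id' t).const_sub 1) ht).congr_deriv ?_
  field_simp
  ring

theorem integral_Ioi_rpow_mul_add_inv {c y : ℝ} (h0 : 0 < c) (h1 : c < 1) (hy : 0 < y) :
    ∫ v in Ioi 0, v ^ (c - 1) * (y + v)⁻¹ = y ^ (c - 1) * (π / sin (π * c)) := by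
  rw [setIntegral_eq_of_bijOn measurableSet_Ioo (bijOn_mul_div_one_sub hy)
    (fun t ht => hasDerivAt_mul_div_one_sub y (sub_pos.2 ht.2).ne')
    (g := fun t => y ^ (c - 1) * (t ^ (c - 1) * (1 - t) ^ (-c))), integral_const_mul,
    integral_rpow_mul_one_sub_rpow_neg h0 h1]
  intro t ⟨ht0, ht1⟩
  have h1t : 0 < 1 - t := sub_pos.2 ht1
  have hsum : y + y * t / (1 - t) = y / (1 - t) := by field_simp; ring
  dsimp only
  rw [hsum, abs_of_pos (by positivity)]
  refine Real.log_injOn_pos (mem_Ioi.2 (by positivity)) (mem_Ioi.2 (by positivity)) ?_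
  simp (disch := positivity) only [log_mul, log_div, log_rpow, log_inv, log_pow]
  ring

theorem bijOn_one_sub_div_sq : BijOn (fun s : ℝ => (1 - s) / s ^ 2) (Ioo 0 1) (Ioi 0) := by
  refine InvOn.bijOn (f' := fun v => 2 / (1 + √(1 + 4 * v)))
    ⟨fun s ⟨hs0, hs1⟩ => ?_, fun v hv => ?_⟩
    (fun s ⟨hs0, hs1⟩ => mem_Ioi.2 (div_pos (sub_pos.2 hs1) (by positivity))) (fun v hv => ?_)
  · have h2s : 0 ≤ (2 - s) / s := div_nonneg (by linarith) hs0.le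
    have hsq : 1 + 4 * ((1 - s) / s ^ 2) = ((2 - s) / s) ^ 2 := by field_simp; ring
    dsimp only
    rw [hsq, sqrt_sq h2s]
    field_simp
    ring
  · have h4 : 0 ≤ 1 + 4 * v := by linarith [mem_Ioi.1 hv]
    have hr := sq_sqrt h4
    dsimp only
    field_simp
    linear_combination hr
  · have hr : 1 < √(1 + 4 * v) := by
      rw [lt_sqrt zero_le_one]; linarith [mem_Ioi.1 hv]
    exact ⟨by positivity, (div_lt_one (by positivity)).2 (by linarith)⟩

theorem hasDerivAt_one_sub_div_sq {s : ℝ} (hs : s ≠ 0) :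
    HasDerivAt (fun s => (1 - s) / s ^ 2) ((s - 2) / s ^ 3) s := by
  refine (((hasDerivAt_id' s).const_sub 1).div
    (hasDerivAt_pow 2 s) (pow_ne_zero 2 hs)).congr_deriv ?_
  field_simp
  ring

theorem integral_Ioi_rpow_mul_add_inv_eq_integral_Ioo (k : ℝ) {y : ℝ} (hy : 0 ≤ y) :
    ∫ v in Ioi 0, v ^ (-(1 + k) / 2) * (y + v)⁻¹
      = ∫ s in Ioo 0 1,
          s ^ k * (1 - s) ^ (-(1 + k) / 2) * ((2 - s) * (1 - s + y * s ^ 2)⁻¹) := by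
  refine setIntegral_eq_of_bijOn measurableSet_Ioo bijOn_one_sub_div_sq
    (fun s hs => hasDerivAt_one_sub_div_sq hs.1.ne') fun s ⟨hs0, hs1⟩ => ?_
  have h1s : 0 < 1 - s := sub_pos.2 hs1
  have h2s : 0 < 2 - s := by linarith
  have hD : 0 < 1 - s + y * s ^ 2 := by positivity
  have hsum : y + (1 - s) / s ^ 2 = (1 - s + y * s ^ 2) / s ^ 2 := by field_simp; ring
  dsimp only
  rw [hsum, abs_div, abs_of_neg (by linarith : s - 2 < 0), neg_sub,
    abs_of_pos (by positivity : (0 : ℝ) < s ^ 3)]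
  refine Real.log_injOn_pos (mem_Ioi.2 (by positivity)) (mem_Ioi.2 (by positivity)) ?_
  simp (disch := positivity) only [log_mul, log_div, log_rpow, log_inv, log_pow]
  ring

noncomputable def singularIntegrand (k x t : ℝ) : ℝ :=
  Real.sign (x - t) * |x - t| ^ (k - 1) * (1 - t) ^ ((1 - k) / 2) * t ^ (-(1 + k) / 2)

section

variable {k x s : ℝ}

theorem sub_mul_one_sub_div (hE : 1 - x * s ≠ 0) :
    x - x * (1 - s) / (1 - x * s) = x * s * (1 - x) / (1 - x * s) := by
  field_simp; ring

theorem one_sub_mul_one_sub_div (hE : 1 - x * s ≠ 0) :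
    1 - x * (1 - s) / (1 - x * s) = (1 - x) / (1 - x * s) := by
  field_simp; ring

theorem bijOn_mul_one_sub_div_one_sub_mul (hx : x ∈ Ioo 0 1) :
    BijOn (fun s => x * (1 - s) / (1 - x * s)) (Ioo 0 1) (Ioo 0 x) := by
  obtain ⟨hx0, hx1⟩ := hx
  refine InvOn.bijOn (f' := fun t => (x - t) / (x * (1 - t))) ⟨fun s ⟨hs0, hs1⟩ => ?_,
    fun t ⟨ht0, htx⟩ => ?_⟩ (fun s ⟨hs0, hs1⟩ => ?_) (fun t ⟨ht0, htx⟩ => ?_)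
  · have hE : 1 - x * s ≠ 0 := by nlinarith
    dsimp only
    rw [sub_mul_one_sub_div hE, one_sub_mul_one_sub_div hE]
    field_simp
  · have : 1 - t ≠ 0 := by linarith
    have h1 : 1 - (x - t) / (x * (1 - t)) = t * (1 - x) / (x * (1 - t)) := by field_simp; ring
    have h2 : 1 - x * ((x - t) / (x * (1 - t))) = (1 - x) / (1 - t) := by field_simp; ring
    dsimp only
    rw [h1, h2]
    field_simp
  · have hE : 0 < 1 - x * s := by nlinarith
    refine ⟨div_pos (by nlinarith) hE, (div_lt_iff₀ hE).2 ?_⟩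
    nlinarith [mul_pos (mul_pos hx0 hs0) (sub_pos.2 hx1)]
  · have : 0 < 1 - t := by linarith
    exact ⟨div_pos (by linarith) (by positivity), (div_lt_one (by positivity)).2 (by nlinarith)⟩

theorem div_one_sub_mul_one_sub_sub (hE : 1 - s * (1 - x) ≠ 0) :
    x / (1 - s * (1 - x)) - x = x * s * (1 - x) / (1 - s * (1 - x)) := by
  field_simp; ring

theorem one_sub_div_one_sub_mul_one_sub (hE : 1 - s * (1 - x) ≠ 0) :
    1 - x / (1 - s * (1 - x)) = (1 - x) * (1 - s) / (1 - s * (1 - x)) := by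
  field_simp; ring

theorem bijOn_div_one_sub_mul_one_sub (hx : x ∈ Ioo 0 1) :
    BijOn (fun s => x / (1 - s * (1 - x))) (Ioo 0 1) (Ioo x 1) := by
  obtain ⟨hx0, hx1⟩ := hx
  refine InvOn.bijOn (f' := fun t => (t - x) / (t * (1 - x))) ⟨fun s ⟨hs0, hs1⟩ => ?_,
    fun t ⟨htx, ht1⟩ => ?_⟩ (fun s ⟨hs0, hs1⟩ => ?_) (fun t ⟨htx, ht1⟩ => ?_)
  · have hE : 1 - s * (1 - x) ≠ 0 := by nlinarith
    dsimp only
    rw [div_one_sub_mul_one_sub_sub hE]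
    field_simp
  · have : 1 - x ≠ 0 := by linarith
    have : t ≠ 0 := by linarith
    have h : 1 - (t - x) / (t * (1 - x)) * (1 - x) = x / t := by field_simp; ring
    dsimp only
    rw [h]
    field_simp
  · have hE : 0 < 1 - s * (1 - x) := by nlinarith
    refine ⟨(lt_div_iff₀ hE).2 ?_, (div_lt_one hE).2 (by nlinarith)⟩
    nlinarith [mul_pos (mul_pos hx0 hs0) (sub_pos.2 hx1)]
  · have : 0 < 1 - x := by linarith
    have : 0 < t := by linarith
    exact ⟨div_pos (by linarith) (by positivity), (div_lt_one (by positivity)).2 (by nlinarith)⟩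

theorem hasDerivAt_mul_one_sub_div_one_sub_mul (hE : 1 - x * s ≠ 0) :
    HasDerivAt (fun s => x * (1 - s) / (1 - x * s)) (-(x * (1 - x)) / (1 - x * s) ^ 2) s := by
  refine ((((hasDerivAt_id' s).const_sub 1).const_mul x).div
    (((hasDerivAt_id' s).const_mul x).const_sub 1) hE).congr_deriv ?_
  field_simp
  ring

theorem hasDerivAt_div_one_sub_mul_one_sub (hE : 1 - s * (1 - x) ≠ 0) :
    HasDerivAt (fun s => x / (1 - s * (1 - x))) (x * (1 - x) / (1 - s * (1 - x)) ^ 2) s := by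
  refine ((hasDerivAt_const s x).div
    (((hasDerivAt_id' s).mul_const (1 - x)).const_sub 1) hE).congr_deriv ?_
  field_simp
  ring

theorem abs_deriv_mul_singularIntegrand_left (k : ℝ) (hx : x ∈ Ioo 0 1) (hs : s ∈ Ioo 0 1) :
    |-(x * (1 - x)) / (1 - x * s) ^ 2| * singularIntegrand k x (x * (1 - s) / (1 - x * s))
      = x ^ ((k - 1) / 2) * (1 - x) ^ ((1 + k) / 2)
        * (s ^ (k - 1) * (1 - s) ^ (-(1 + k) / 2) * (1 - x * s)⁻¹) := by
  obtain ⟨⟨hx0, hx1⟩, ⟨hs0, hs1⟩⟩ := And.intro hx hs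
  have h1x : 0 < 1 - x := sub_pos.2 hx1
  have h1s : 0 < 1 - s := sub_pos.2 hs1
  have hE : 0 < 1 - x * s := by nlinarith
  have hpos : 0 < x * s * (1 - x) / (1 - x * s) := by positivity
  rw [singularIntegrand, sub_mul_one_sub_div hE.ne', one_sub_mul_one_sub_div hE.ne',
    sign_of_pos hpos, abs_of_pos hpos, one_mul, abs_div, abs_neg, abs_of_pos (by positivity),
    abs_of_pos (by positivity)]
  refine Real.log_injOn_pos (mem_Ioi.2 (by positivity)) (mem_Ioi.2 (by positivity)) ?_
  simp (disch := positivity) only [log_mul, log_div, log_rpow, log_inv, log_pow]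
  ring

theorem abs_deriv_mul_singularIntegrand_right (k : ℝ) (hx : x ∈ Ioo 0 1) (hs : s ∈ Ioo 0 1) :
    |x * (1 - x) / (1 - s * (1 - x)) ^ 2| * singularIntegrand k x (x / (1 - s * (1 - x)))
      = -(x ^ ((k - 1) / 2) * (1 - x) ^ ((1 + k) / 2)
        * (s ^ (k - 1) * (1 - s) ^ ((1 - k) / 2) * (1 - s * (1 - x))⁻¹)) := by
  obtain ⟨⟨hx0, hx1⟩, ⟨hs0, hs1⟩⟩ := And.intro hx hs
  have h1x : 0 < 1 - x := sub_pos.2 hx1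
  have h1s : 0 < 1 - s := sub_pos.2 hs1
  have hE : 0 < 1 - s * (1 - x) := by nlinarith
  have hpos : 0 < x * s * (1 - x) / (1 - s * (1 - x)) := by positivity
  rw [singularIntegrand, ← neg_sub (x / _), div_one_sub_mul_one_sub_sub hE.ne',
    one_sub_div_one_sub_mul_one_sub hE.ne', sign_neg, sign_of_pos hpos, abs_neg, abs_of_pos hpos,
    abs_of_pos (by positivity), neg_one_mul, neg_mul, neg_mul, mul_neg, neg_inj]
  refine Real.log_injOn_pos (mem_Ioi.2 (by positivity)) (mem_Ioi.2 (by positivity)) ?_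
  simp (disch := positivity) only [log_mul, log_div, log_rpow, log_inv, log_pow]
  ring

theorem integrableOn_left_kernel (hk : k ∈ Ioo 0 1) (hx : x ∈ Ioo 0 1) :
    IntegrableOn (fun s => s ^ (k - 1) * (1 - s) ^ (-(1 + k) / 2) * (1 - x * s)⁻¹) (Ioo 0 1) :=
  integrableOn_rpow_mul_one_sub_rpow_mul (by linarith [hk.1]) (by linarith [hk.2])
    (ContinuousOn.inv₀ (by fun_prop) fun s hs => by nlinarith [hs.1, hs.2, hx.1, hx.2])

theorem integrableOn_right_kernel (hk : k ∈ Ioo 0 1) (hx : x ∈ Ioo 0 1) :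
    IntegrableOn (fun s => s ^ (k - 1) * (1 - s) ^ ((1 - k) / 2) * (1 - s * (1 - x))⁻¹)
      (Ioo 0 1) :=
  integrableOn_rpow_mul_one_sub_rpow_mul (by linarith [hk.1]) (by linarith [hk.2])
    (ContinuousOn.inv₀ (by fun_prop) fun s hs => by nlinarith [hs.1, hs.2, hx.1, hx.2])

theorem integrableOn_and_setIntegral_singularIntegrand_left (hk : k ∈ Ioo 0 1)
    (hx : x ∈ Ioo 0 1) :
    IntegrableOn (singularIntegrand k x) (Ioo 0 x) ∧
      ∫ t in Ioo 0 x, singularIntegrand k x t = x ^ ((k - 1) / 2) * (1 - x) ^ ((1 + k) / 2)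
        * ∫ s in Ioo 0 1, s ^ (k - 1) * (1 - s) ^ (-(1 + k) / 2) * (1 - x * s)⁻¹ := by
  have hφ' : ∀ s ∈ Ioo (0 : ℝ) 1, HasDerivAt _ _ s := fun s hs =>
    hasDerivAt_mul_one_sub_div_one_sub_mul (x := x) (by nlinarith [hs.1, hs.2, hx.1, hx.2])
  have hfg := fun s hs => abs_deriv_mul_singularIntegrand_left k hx (s := s) hs
  have hφ := bijOn_mul_one_sub_div_one_sub_mul hx
  refine ⟨integrableOn_of_bijOn measurableSet_Ioo hφ hφ' hfg
    ((integrableOn_left_kernel hk hx).const_mul _), ?_⟩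
  rw [setIntegral_eq_of_bijOn measurableSet_Ioo hφ hφ' hfg, integral_const_mul]

theorem integrableOn_and_setIntegral_singularIntegrand_right (hk : k ∈ Ioo 0 1)
    (hx : x ∈ Ioo 0 1) :
    IntegrableOn (singularIntegrand k x) (Ioo x 1) ∧
      ∫ t in Ioo x 1, singularIntegrand k x t = -(x ^ ((k - 1) / 2) * (1 - x) ^ ((1 + k) / 2)
        * ∫ s in Ioo 0 1, s ^ (k - 1) * (1 - s) ^ ((1 - k) / 2) * (1 - s * (1 - x))⁻¹) := by
  have hφ' : ∀ s ∈ Ioo (0 : ℝ) 1, HasDerivAt _ _ s := fun s hs =>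
    hasDerivAt_div_one_sub_mul_one_sub (x := x) (by nlinarith [hs.1, hs.2, hx.1, hx.2])
  have hfg := fun s hs => abs_deriv_mul_singularIntegrand_right k hx (s := s) hs
  have hφ := bijOn_div_one_sub_mul_one_sub hx
  refine ⟨integrableOn_of_bijOn measurableSet_Ioo hφ hφ' hfg
    ((integrableOn_right_kernel hk hx).const_mul _).neg, ?_⟩
  rw [setIntegral_eq_of_bijOn measurableSet_Ioo hφ hφ' hfg, integral_neg, integral_const_mul]

theorem left_kernel_sub_right_kernel (hx : x ∈ Ioo 0 1) (hs : s ∈ Ioo 0 1) :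
    s ^ (k - 1) * (1 - s) ^ (-(1 + k) / 2) * (1 - x * s)⁻¹
        - s ^ (k - 1) * (1 - s) ^ ((1 - k) / 2) * (1 - s * (1 - x))⁻¹
      = x * (s ^ k * (1 - s) ^ (-(1 + k) / 2)
        * ((2 - s) * (1 - s + x * (1 - x) * s ^ 2)⁻¹)) := by
  obtain ⟨⟨hx0, hx1⟩, ⟨hs0, hs1⟩⟩ := And.intro hx hs
  have h1 : 1 - x * s ≠ 0 := by nlinarith
  have h2 : 1 - s * (1 - x) ≠ 0 := by nlinarith
  have hk' : s ^ k = s ^ (k - 1) * s := by rw [← rpow_add_one hs0.ne', sub_add_cancel]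
  have hq : (1 - s) ^ ((1 - k) / 2) = (1 - s) ^ (-(1 + k) / 2) * (1 - s) := by
    rw [← rpow_add_one (sub_pos.2 hs1).ne']; ring_nf
  rw [hk', hq, show 1 - s + x * (1 - x) * s ^ 2 = (1 - x * s) * (1 - s * (1 - x)) by ring,
    mul_inv]
  set A := s ^ (k - 1) * (1 - s) ^ (-(1 + k) / 2)
  linear_combination (-(A * (1 - x * s)⁻¹)) * mul_inv_cancel₀ h2
    + (A * (1 - s) * (1 - s * (1 - x))⁻¹) * mul_inv_cancel₀ h1

theorem intervalIntegral_singularIntegrand (hk : k ∈ Ioo 0 1) (hx : x ∈ Ioo 0 1) :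
    ∫ t in (0 : ℝ)..1, singularIntegrand k x t
      = x ^ ((k - 1) / 2) * (1 - x) ^ ((1 + k) / 2) * x
      * ∫ s in Ioo 0 1, s ^ k * (1 - s) ^ (-(1 + k) / 2)
        * ((2 - s) * (1 - s + x * (1 - x) * s ^ 2)⁻¹) := by
  obtain ⟨hIL, hL⟩ := integrableOn_and_setIntegral_singularIntegrand_left hk hx
  obtain ⟨hIR, hR⟩ := integrableOn_and_setIntegral_singularIntegrand_right hk hx
  rw [← intervalIntegral.integral_add_adjacent_intervals
      ((intervalIntegrable_iff_integrableOn_Ioo_of_le hx.1.le).2 hIL)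
      ((intervalIntegrable_iff_integrableOn_Ioo_of_le hx.2.le).2 hIR),
    intervalIntegral.integral_of_le hx.1.le, intervalIntegral.integral_of_le hx.2.le,
    integral_Ioc_eq_integral_Ioo, integral_Ioc_eq_integral_Ioo, hL, hR, ← sub_eq_add_neg,
    ← mul_sub,
    ← integral_sub (integrableOn_left_kernel hk hx) (integrableOn_right_kernel hk hx),
    setIntegral_congr_fun measurableSet_Ioo fun s hs => left_kernel_sub_right_kernel hx hs,
    integral_const_mul]
  ring

end

theorem singular_integral_jacobi_const (k x : ℝ) (hk : k ∈ Set.Ioo (0:ℝ) 1)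
    (hx : x ∈ Set.Ioo (0:ℝ) 1) :
    (∫ t in (0:ℝ)..1, Real.sign (x - t) * |x - t| ^ (k - 1)
        * (1 - t) ^ ((1 - k) / 2) * t ^ (-(1 + k) / 2))
      = π / Real.sin ((1 - k) * π / 2) := by
  have hy : 0 < x * (1 - x) := mul_pos hx.1 (sub_pos.2 hx.2)
  have hC :
      x ^ ((k - 1) / 2) * (1 - x) ^ ((1 + k) / 2) * x * (x * (1 - x)) ^ ((1 - k) / 2 - 1) = 1 := by
    have := hx.1; have := sub_pos.2 hx.2
    refine Real.log_injOn_pos (mem_Ioi.2 (by positivity)) (mem_Ioi.2 one_pos) ?_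
    simp (disch := positivity) only [log_mul, log_rpow, log_one]
    ring
  change ∫ t in (0 : ℝ)..1, singularIntegrand k x t = _
  rw [intervalIntegral_singularIntegrand hk hx,
    ← integral_Ioi_rpow_mul_add_inv_eq_integral_Ioo k hy.le,
    show -(1 + k) / 2 = (1 - k) / 2 - 1 by ring,
    integral_Ioi_rpow_mul_add_inv (by linarith [hk.2]) (by linarith [hk.1]) hy, ← mul_assoc, hC,
    one_mul]
  ring_nf
end
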